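/- arXiv:2201.03516 — 3 statements merged into one kernel-verified Lean document; each statement's English description precedes it below -/
import Mathlib

section
/- Let h = g ∘ f where f is an epimorphism. If h is a pushout of some morphism a (i.e., there is a pushout square with a on one side and h on the parallel side), then g is also a pushout of a. -/
open CategoryTheory

/-- If `h = g ∘ f` with `f` epi, and `h : R ⟶ T` is a pushout of `a : A ⟶ B` along
`u : A ⟶ R`, then `g : S ⟶ T` is a pushout of `a` along `u ≫ f : A ⟶ S`. -/
theorem pushout_of_comp_epi {C : Type*} [Category C] {A B R S T : C}
    (a : A ⟶ B) (u : A ⟶ R) (w : B ⟶ T) (f : R ⟶ S) (g : S ⟶ T) [Epi f]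
    (hpo : IsPushout a u w (f ≫ g)) :
    IsPushout a (u ≫ f) w g := by
  have comm : a ≫ w = (u ≫ f) ≫ g := by
    rw [Category.assoc]; exact hpo.w
  have hc : ∀ s : Limits.PushoutCocone a (u ≫ f),
      a ≫ s.inl = u ≫ f ≫ s.inr := fun s => by
    simpa [Category.assoc] using s.condition
  refine IsPushout.of_isColimit' ⟨comm⟩ ?_
  refine Limits.PushoutCocone.IsColimit.mk _
    (fun s => hpo.desc s.inl (f ≫ s.inr) (hc s)) ?_ ?_ ?_
  · intro s
    exact hpo.inl_desc _ _ _
  · intro s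
    rw [← cancel_epi f, ← Category.assoc]
    exact hpo.inr_desc _ _ _
  · intro s m h1 h2
    apply hpo.hom_ext
    · rw [hpo.inl_desc]; exact h1
    · rw [hpo.inr_desc, Category.assoc, h2]
end

section
/- Let E be a class of morphisms closed under pullbacks and composition in a category with pullbacks. Given a natural transformation between two cospans A → C ← B and A' → C' ← B' (maps a : A' → A, c : C' → C, b : B' → B commuting with the cospan legs), if c belongs to E and both pullback corner maps A' → A ×_C C' and B' → B ×_C C' belong to E, then the induced map on pullbacks A' ×_{C'} B' → A ×_C B belongs to E. -/
open CategoryTheory CategoryTheory.Limits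

/-- Modifying the right leg of a pullback by a map `g : Y' ⟶ Y` gives a square that is
itself a pullback of `g`. -/
theorem auxR {𝒞 : Type*} [Category 𝒞] [HasPullbacks 𝒞] {X Y Y' Z : 𝒞}
    (f : X ⟶ Z) (k : Y ⟶ Z) (g : Y' ⟶ Y) (k' : Y' ⟶ Z) (hk : k' = g ≫ k) :
    IsPullback (pullback.map f k' f k (𝟙 X) g (𝟙 Z) (by simp) (by simp [hk]))
      (pullback.snd f k') (pullback.snd f k) g := by
  refine IsPullback.of_right ?_ (by simp [pullback.lift_snd]) (IsPullback.of_hasPullback f k)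
  have h : pullback.map f k' f k (𝟙 X) g (𝟙 Z) (by simp) (by simp [hk]) ≫
      pullback.fst f k = pullback.fst f k' := by simp [pullback.lift_fst]
  rw [h, ← hk]
  exact IsPullback.of_hasPullback f k'

/-- Modifying the left leg of a pullback by a map `g : X' ⟶ X` gives a square that is
itself a pullback of `g`. -/
theorem auxL {𝒞 : Type*} [Category 𝒞] [HasPullbacks 𝒞] {X X' Y Z : 𝒞}
    (f : X ⟶ Z) (k : Y ⟶ Z) (g : X' ⟶ X) (f' : X' ⟶ Z) (hf : f' = g ≫ f) :
    IsPullback (pullback.map f' k f k g (𝟙 Y) (𝟙 Z) (by simp [hf]) (by simp))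
      (pullback.fst f' k) (pullback.fst f k) g := by
  refine IsPullback.of_right ?_ (by simp [pullback.lift_fst]) (IsPullback.of_hasPullback f k).flip
  have h : pullback.map f' k f k g (𝟙 Y) (𝟙 Z) (by simp [hf]) (by simp) ≫
      pullback.snd f k = pullback.snd f' k := by simp [pullback.lift_snd]
  rw [h, ← hf]
  exact (IsPullback.of_hasPullback f' k).flip

/-- Let `E` be a class of morphisms closed under pullbacks and composition. Given a map of
cospans `(a, c, b) : (A' → C' ← B') ⟶ (A → C ← B)` with `c ∈ E` and both pullback corner
maps `A' → A ×_C C'` and `B' → B ×_C C'` in `E`, the induced map on pullbacks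
`A' ×_{C'} B' → A ×_C B` belongs to `E`. -/
theorem pullback_map_mem_of_corner_maps_mem {𝒞 : Type*} [Category 𝒞] [HasPullbacks 𝒞]
    (E : MorphismProperty 𝒞)
    (hE_pb : ∀ {X Y Z W : 𝒞} (f : X ⟶ Z) (g : Y ⟶ Z) (p : W ⟶ X) (q : W ⟶ Y),
      IsPullback p q f g → E g → E p)
    (hE_comp : ∀ {X Y Z : 𝒞} (f : X ⟶ Y) (g : Y ⟶ Z), E f → E g → E (f ≫ g))
    {A B Cc A' B' Cc' : 𝒞} (fa : A ⟶ Cc) (fb : B ⟶ Cc) (fa' : A' ⟶ Cc') (fb' : B' ⟶ Cc')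
    (a : A' ⟶ A) (b : B' ⟶ B) (c : Cc' ⟶ Cc)
    (ha : fa' ≫ c = a ≫ fa) (hb : fb' ≫ c = b ≫ fb)
    (hc : E c)
    (hcornerA : E (pullback.lift a fa' ha.symm : A' ⟶ pullback fa c))
    (hcornerB : E (pullback.lift b fb' hb.symm : B' ⟶ pullback fb c)) :
    E (pullback.map fa' fb' fa fb a b c ha hb) := by
  -- Notation
  set PA := pullback fa c
  set PB := pullback fb c
  let ca : A' ⟶ PA := pullback.lift a fa' ha.symm
  let cb : B' ⟶ PB := pullback.lift b fb' hb.symm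
  let sA : PA ⟶ Cc' := pullback.snd fa c
  let sB : PB ⟶ Cc' := pullback.snd fb c
  let tA : PA ⟶ A := pullback.fst fa c
  let tB : PB ⟶ B := pullback.fst fb c
  have hca : fa' = ca ≫ sA := by simp [ca, sA, pullback.lift_snd]
  have hcb : fb' = cb ≫ sB := by simp [cb, sB, pullback.lift_snd]
  -- projections are pullbacks of c
  have htA : E tA := hE_pb fa c tA sA (IsPullback.of_hasPullback fa c) hc
  have htB : E tB := hE_pb fb c tB sB (IsPullback.of_hasPullback fb c) hc
  -- first factor: change the left leg along ca
  let T1 : pullback fa' fb' ⟶ pullback sA fb' :=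
    pullback.map fa' fb' sA fb' ca (𝟙 B') (𝟙 Cc') (by simp [hca]) (by simp)
  have hT1 : E T1 :=
    hE_pb _ _ _ _ (auxL sA fb' ca fa' hca) hcornerA
  -- second factor: change the right leg along cb
  let T2 : pullback sA fb' ⟶ pullback sA sB :=
    pullback.map sA fb' sA sB (𝟙 PA) cb (𝟙 Cc') (by simp) (by simp [hcb])
  have hT2 : E T2 :=
    hE_pb _ _ _ _ (auxR sA sB cb fb' hcb) hcornerB
  -- third factor
  let W : pullback sA sB ⟶ pullback fa fb :=
    pullback.map sA sB fa fb tA tB c pullback.condition.symm pullback.condition.symm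
  -- the big rectangle: pullback sA sB is also the pullback of fb along sA ≫ c
  have hbig : IsPullback (pullback.snd sA sB ≫ tB) (pullback.fst sA sB) fb (sA ≫ c) := by
    exact ((IsPullback.of_hasPullback sA sB).flip).paste_horiz
      (IsPullback.of_hasPullback fb c)
  have hbig' : IsPullback (pullback.snd sA sB ≫ tB) (pullback.fst sA sB) fb (tA ≫ fa) := by
    rwa [← pullback.condition] at hbig
  have hWpb : IsPullback W (pullback.fst sA sB) (pullback.fst fa fb) tA := by
    refine IsPullback.of_right ?_ (by simp [W, tA, pullback.lift_fst]) (IsPullback.of_hasPullback fa fb).flip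
    have h : W ≫ pullback.snd fa fb = pullback.snd sA sB ≫ tB := by simp [W, tB, pullback.lift_snd]
    rw [h]
    exact hbig'
  have hW : E W := hE_pb _ _ _ _ hWpb htA
  -- factorization
  have hfact : pullback.map fa' fb' fa fb a b c ha hb = T1 ≫ T2 ≫ W := by
    apply pullback.hom_ext <;>
      simp [T1, T2, W, ca, cb, tA, tB, pullback.lift_fst, pullback.lift_snd, pullback.lift_fst_assoc, pullback.lift_snd_assoc]
  rw [hfact]
  exact hE_comp _ _ hT1 (hE_comp _ _ hT2 hW)
end

section
/- Assume epimorphisms are stable under pullback in a category with pullbacks. Given a commutative square with f' : A' → B' on top, f : A → B on the bottom, vertical maps a : A' → A and b : B' → B, if b is an epimorphism and the pullback corner map A' → A ×_B B' is an epimorphism, then the induced map on kernel pairs A' ×_{B'} A' → A ×_B A is an epimorphism. -/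
open CategoryTheory CategoryTheory.Limits

/-- If a square is a pullback and its bottom map is epi (with epis stable under
pullback), then its top map is epi. -/
lemma epi_top_of_isPullback {C : Type*} [Category C] [HasPullbacks C]
    (hepi : ∀ {X Y Z : C} (g : X ⟶ Z) (h : Y ⟶ Z) [Epi h], Epi (pullback.fst g h))
    {W X Y Z : C} {p : W ⟶ X} {q : W ⟶ Y} {r : X ⟶ Z} {h : Y ⟶ Z} [Epi h]
    (H : IsPullback p q r h) : Epi p := by
  have : Epi (pullback.fst r h) := hepi r h
  rw [← H.isoPullback_hom_fst]
  exact epi_comp _ _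

/-- Assume epimorphisms are stable under pullback. In a commutative square with top
`f' : A' ⟶ B'`, bottom `f : A ⟶ B`, vertical maps `a`, `b`, if `b` is an epimorphism and
the pullback corner map `A' ⟶ A ×_B B'` is an epimorphism, then the induced map on kernel
pairs `A' ×_{B'} A' ⟶ A ×_B A` is an epimorphism. -/
theorem epi_kernelPair_map {C : Type*} [Category C] [HasPullbacks C]
    (hepi : ∀ {X Y Z : C} (g : X ⟶ Z) (h : Y ⟶ Z) [Epi h], Epi (pullback.fst g h))
    {A A' B B' : C} (f : A ⟶ B) (f' : A' ⟶ B') (a : A' ⟶ A) (b : B' ⟶ B)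
    (hcomm : a ≫ f = f' ≫ b) [Epi b]
    (hcorner : Epi (pullback.lift a f' hcomm : A' ⟶ pullback f b)) :
    Epi (pullback.map f' f' f f a a b hcomm.symm hcomm.symm) := by
  set P := pullback f b
  set π : P ⟶ A := pullback.fst f b with hπ
  set g : P ⟶ B' := pullback.snd f b with hg
  set c : A' ⟶ P := pullback.lift a f' hcomm with hc
  have hcπ : c ≫ π = a := pullback.lift_fst _ _ _
  have hcg : c ≫ g = f' := pullback.lift_snd _ _ _
  -- first map: change the first coordinate A' ↦ P
  let k1 : pullback f' f' ⟶ pullback f' g :=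
    pullback.map f' f' f' g (𝟙 A') c (𝟙 B') (by simp) (by simp [hcg])
  -- second map: change the second coordinate A' ↦ P
  let k2 : pullback f' g ⟶ pullback g g :=
    pullback.map f' g g g c (𝟙 P) (𝟙 B') (by simp [hcg]) (by simp)
  -- third map: change the base B' ↦ B, i.e. (P ×_{B'} P ⟶ A ×_B A)
  have hπf : g ≫ b = π ≫ f := pullback.condition.symm
  let m2 : pullback g g ⟶ pullback f f :=
    pullback.map g g f f π π b hπf hπf
  -- k1 is a pullback of c, hence epi
  have S1 : IsPullback k1 (pullback.snd f' f') (pullback.snd f' g) c := by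
    apply IsPullback.of_right (h₁₂ := pullback.fst f' g) (v₁₃ := f')
      (h₂₂ := g) ?_ (by simp [k1, pullback.lift_fst, pullback.lift_snd]) (IsPullback.of_hasPullback f' g)
    have e1 : k1 ≫ pullback.fst f' g = pullback.fst f' f' := by simp [k1, pullback.lift_fst, pullback.lift_snd]
    rw [e1, hcg]
    exact IsPullback.of_hasPullback f' f'
  have hk1 : Epi k1 := epi_top_of_isPullback hepi S1
  -- k2 is a pullback of c, hence epi
  have S2 : IsPullback k2 (pullback.fst f' g) (pullback.fst g g) c := by
    apply IsPullback.of_right (h₁₂ := pullback.snd g g) (v₁₃ := g)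
      (h₂₂ := g) ?_ (by simp [k2, pullback.lift_fst, pullback.lift_snd]) (IsPullback.of_hasPullback g g).flip
    have e1 : k2 ≫ pullback.snd g g = pullback.snd f' g := by simp [k2, pullback.lift_fst, pullback.lift_snd]
    rw [e1, hcg]
    exact (IsPullback.of_hasPullback f' g).flip
  have hk2 : Epi k2 := epi_top_of_isPullback hepi S2
  -- m2 is a pullback of b, hence epi
  have U : IsPullback m2 (pullback.snd g g) (pullback.snd f f) π := by
    apply IsPullback.of_right (h₁₂ := pullback.fst f f) (v₁₃ := f)
      (h₂₂ := f) ?_ (by simp [m2, pullback.lift_fst, pullback.lift_snd]) (IsPullback.of_hasPullback f f)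
    have e1 : m2 ≫ pullback.fst f f = pullback.fst g g ≫ π := by simp [m2, pullback.lift_fst, pullback.lift_snd]
    rw [e1]
    have s := (IsPullback.of_hasPullback g g).paste_horiz (IsPullback.of_hasPullback f b)
    rwa [← hπ, hπf] at s
  have S3 : IsPullback m2 (pullback.snd g g ≫ g) (pullback.snd f f ≫ f) b :=
    U.paste_vert (IsPullback.of_hasPullback f b)
  have hm2 : Epi m2 := epi_top_of_isPullback hepi S3
  -- the composite is the induced map on kernel pairs
  have hcompose : k1 ≫ k2 ≫ m2 = pullback.map f' f' f f a a b hcomm.symm hcomm.symm := by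
    apply pullback.hom_ext <;> simp [k1, k2, m2, hcπ, hcg, pullback.lift_fst, pullback.lift_snd, pullback.lift_fst_assoc, pullback.lift_snd_assoc]
  rw [← hcompose]
  exact epi_comp _ _
end
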